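/- arXiv:2111.11884 — 2 statements merged into one kernel-verified Lean document; each statement's English description precedes it below -/
import Mathlib

section
/- Let $m \in \mathbb{N}$, $\lambda_1, \ldots, \lambda_m \in \mathbb{C}^*$, and $s_1, \ldots, s_m \in \mathbb{N}$ with $s_1 + \cdots + s_m = s$. Define functions $f_1(n) = \lambda_1^n, f_2(n) = n\lambda_1^n, \ldots, f_{s_1}(n) = n^{s_1-1}\lambda_1^n, f_{s_1+1}(n) = \lambda_2^n, \ldots, f_s(n) = n^{s_m-1}\lambda_m^n$. Let $\mathfrak{M} = (y_{pq})$ be the $s \times s$ matrix with $y_{pq} = f_q(p-1)$ for $q = 1, \ldots, s$ and $p = r+1, \ldots, r+s$ where $r \in \mathbb{Z}_{\geq 0}$. Then $\det(\mathfrak{M}) = \prod_{j=1}^m (s_j - 1)!! \, \lambda_j^{s_j(s_j+2r-1)/2} \prod_{1 \leq i < j \leq m} (\lambda_j - \lambda_i)^{s_i s_j}$, where $s_j!! = s_j! \cdot (s_j-1)! \cdots 2! \cdot 1!$ with $0!! = 1$. -/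
open Finset Polynomial Matrix


section GV

variable {m : ℕ} (sfun : Fin m → ℕ)

local notation "ι" => (Σ j : Fin m, Fin (sfun j))

variable (pos : (Σ j : Fin m, Fin (sfun j)) → ℕ)
variable (hs : ∀ j, 0 < sfun j)
variable (hpos : ∀ x : Σ j : Fin m, Fin (sfun j),
      pos x = (∑ i ∈ Finset.univ.filter (fun i : Fin m => i < x.1), sfun i) + x.2.1)

-- partial sum monotonicity
lemma gv_psum_le {i j : Fin m} (hij : i < j) :
    (∑ k ∈ univ.filter (fun k : Fin m => k < i), sfun k) + sfun i
      ≤ ∑ k ∈ univ.filter (fun k : Fin m => k < j), sfun k := by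
  have h1 : insert i (univ.filter (fun k : Fin m => k < i))
      ⊆ univ.filter (fun k : Fin m => k < j) := by
    intro k hk
    rcases Finset.mem_insert.1 hk with rfl | hk'
    · simpa using hij
    · simp only [mem_filter, mem_univ, true_and] at *
      exact lt_trans hk' hij
  calc (∑ k ∈ univ.filter (fun k : Fin m => k < i), sfun k) + sfun i
      = ∑ k ∈ insert i (univ.filter (fun k : Fin m => k < i)), sfun k := by
        rw [Finset.sum_insert (by simp)]; ring
    _ ≤ _ := Finset.sum_le_sum_of_subset h1

include hpos in
lemma gv_pos_lt_iff (a b : Σ j : Fin m, Fin (sfun j)) :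
    pos a < pos b ↔ (a.1 < b.1 ∨ (a.1 = b.1 ∧ a.2.1 < b.2.1)) := by
  constructor
  · intro h
    rcases lt_trichotomy a.1 b.1 with h1 | h1 | h1
    · exact Or.inl h1
    · refine Or.inr ⟨h1, ?_⟩
      rw [hpos a, hpos b] at h
      obtain ⟨a1,a2⟩ := a; obtain ⟨b1,b2⟩ := b
      simp only at h1; subst h1
      simpa using h
    · exfalso
      have := gv_psum_le sfun h1
      rw [hpos a, hpos b] at h
      have hb2 := b.2.2
      omega
  · rintro (h | ⟨h1, h2⟩)
    · have := gv_psum_le sfun h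
      rw [hpos a, hpos b]
      have ha2 := a.2.2
      omega
    · rw [hpos a, hpos b]
      obtain ⟨a1,a2⟩ := a; obtain ⟨b1,b2⟩ := b
      simp only at h1; subst h1
      simpa using h2

include hpos in
lemma gv_pos_lt_total (a : Σ j : Fin m, Fin (sfun j)) :
    pos a < ∑ j, sfun j := by
  rw [hpos a]
  have h1 : insert a.1 (univ.filter (fun k : Fin m => k < a.1)) ⊆ univ := by simp
  have := Finset.sum_le_sum_of_subset (f := sfun) h1
  rw [Finset.sum_insert (by simp)] at this
  have ha2 := a.2.2
  omega

include hpos in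
lemma gv_pos_inj : Function.Injective pos := by
  intro a b h
  rcases lt_trichotomy a.1 b.1 with h1 | h1 | h1
  · have := (gv_pos_lt_iff sfun pos hpos a b).2 (Or.inl h1); omega
  · rcases Nat.lt_trichotomy a.2.1 b.2.1 with h2 | h2 | h2
    · have := (gv_pos_lt_iff sfun pos hpos a b).2 (Or.inr ⟨h1, h2⟩); omega
    · obtain ⟨a1, a2⟩ := a; obtain ⟨b1, b2⟩ := b
      cases h1; cases Fin.ext h2; rfl
    · have := (gv_pos_lt_iff sfun pos hpos b a).2 (Or.inr ⟨h1.symm, h2⟩); omega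
  · have := (gv_pos_lt_iff sfun pos hpos b a).2 (Or.inl h1); omega

end GV


noncomputable def gvG (n : ℕ) : ℂ[X] := ∑ i ∈ range n, (1 + X) ^ i

lemma gvG_mul_X (n : ℕ) : X * gvG n = (1 + X) ^ n - 1 := by
  have := geom_sum_mul (1 + X : ℂ[X]) n
  simpa [gvG, mul_comm] using this

lemma gv_sub_one_pow (z : ℂ[X]) (x : ℕ) :
    (z - 1) ^ x = ∑ l ∈ range (x + 1), z ^ l * (-1) ^ (x - l) * (x.choose l : ℂ[X]) := by
  rw [sub_eq_add_neg, add_pow]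

lemma gvG_eval (n : ℕ) : eval 0 (gvG n) = n := by
  simp [gvG, eval_finset_sum]

lemma gv_fin_sum_ite (n : ℕ) (y : Fin n) :
    (∑ x : Fin n, if x.1 < y.1 then 1 else 0) = y.1 := by
  rw [Fin.sum_univ_eq_sum_range (fun x => if x < y.1 then 1 else 0)]
  have : ∀ x, (if x < y.1 then 1 else 0) = if x ∈ range y.1 then 1 else 0 := by
    intro x; simp
  simp_rw [this]
  rw [Finset.sum_ite_mem]
  have : range n ∩ range y.1 = range y.1 := by
    rw [Finset.inter_eq_right]
    exact Finset.range_subset_range.2 (le_of_lt y.2)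
  simp [this]

lemma gv_fin_prod_ite_sub (n : ℕ) (y : Fin n) :
    (∏ x : Fin n, if x.1 < y.1 then ((y.1 - x.1 : ℕ) : ℂ) else 1) = (Nat.factorial y.1 : ℂ) := by
  rw [Fin.prod_univ_eq_prod_range (fun x => if x < y.1 then ((y.1 - x : ℕ) : ℂ) else 1)]
  have : ∀ x, (if x < y.1 then ((y.1 - x : ℕ) : ℂ) else 1)
      = if x ∈ range y.1 then ((y.1 - x : ℕ) : ℂ) else 1 := by intro x; simp
  simp_rw [this]
  rw [Finset.prod_ite_mem]
  have hinter : range n ∩ range y.1 = range y.1 := by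
    rw [Finset.inter_eq_right]
    exact Finset.range_subset_range.2 (le_of_lt y.2)
  rw [hinter]
  rw [← Nat.cast_prod]
  congr 1
  have := Finset.prod_range_reflect (fun j => j + 1) y.1
  rw [Finset.prod_range_add_one_eq_factorial] at this
  rw [← this]
  refine Finset.prod_congr rfl fun j hj => ?_
  simp only [mem_range] at hj
  omega

lemma gv_nat_exp (s r : ℕ) (hs : 0 < s) :
    (∑ i ∈ range s, i) + r * s = s * (s + 2 * r - 1) / 2 := by
  obtain ⟨k, rfl⟩ : ∃ k, s = k + 1 := ⟨s - 1, by omega⟩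
  rw [Finset.sum_range_id]
  have h1 : (k + 1) * (k + 1 + 2 * r - 1) = (k + 1) * k + r * (k + 1) * 2 := by
    have : k + 1 + 2 * r - 1 = k + 2 * r := by omega
    rw [this]; ring
  rw [h1, Nat.add_mul_div_right _ _ (by norm_num : (0:ℕ) < 2)]
  simp


section Main

variable {m : ℕ} {sfun : Fin m → ℕ} (lam : Fin m → ℂ) (r : ℕ)
  (pos : (Σ j : Fin m, Fin (sfun j)) → ℕ)
  (hinj : Function.Injective pos)
  (hlt : ∀ a, pos a < ∑ j, sfun j)
  (hiff : ∀ a b, pos a < pos b ↔ (a.1 < b.1 ∨ (a.1 = b.1 ∧ a.2.1 < b.2.1)))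

noncomputable def gvE (hinj : Function.Injective pos) (hlt : ∀ a, pos a < ∑ j, sfun j) :
    (Σ j : Fin m, Fin (sfun j)) ≃ Fin (∑ j, sfun j) :=
  Equiv.ofBijective (fun a => ⟨pos a, hlt a⟩)
    ((Fintype.bijective_iff_injective_and_card _).2
      ⟨fun a b h => hinj (by simpa using congrArg Fin.val h), by simp⟩)

lemma gvE_val (a : Σ j : Fin m, Fin (sfun j)) : ((gvE pos hinj hlt a : Fin _) : ℕ) = pos a := rfl

lemma gv_pos_symm (b : Fin (∑ j, sfun j)) : pos ((gvE pos hinj hlt).symm b) = (b : ℕ) := by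
  have := (gvE pos hinj hlt).apply_symm_apply b
  exact congrArg Fin.val this

include pos hinj hlt hiff in
/-- the column operation matrix has determinant 1 -/
lemma gv_detT :
    (Matrix.of fun q' q : Σ j : Fin m, Fin (sfun j) =>
      if q'.1 = q.1 then ((-1 : ℂ[X]) ^ (q.2.1 - q'.2.1) * (q.2.1.choose q'.2.1 : ℂ[X])) else 0).det
      = 1 := by
  set T := (Matrix.of fun q' q : Σ j : Fin m, Fin (sfun j) =>
      if q'.1 = q.1 then ((-1 : ℂ[X]) ^ (q.2.1 - q'.2.1) * (q.2.1.choose q'.2.1 : ℂ[X])) else 0)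
  set e := gvE pos hinj hlt
  have h1 : T.det = (T.submatrix e.symm e.symm).det := by
    rw [Matrix.det_submatrix_equiv_self]
  rw [h1]
  have htri : (T.submatrix e.symm e.symm).BlockTriangular id := by
    intro a b hab
    simp only [Matrix.submatrix_apply, id] at hab ⊢
    set q' := e.symm a
    set q := e.symm b
    have hq : pos q < pos q' := by
      rw [gv_pos_symm pos hinj hlt, gv_pos_symm pos hinj hlt]
      exact hab
    rw [hiff] at hq
    show T q' q = 0
    rcases hq with h | ⟨h, h2⟩
    · have : q'.1 ≠ q.1 := ne_of_gt h
      simp [T, this]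
    · have : q.2.1.choose q'.2.1 = 0 := Nat.choose_eq_zero_of_lt h2
      simp [T, h, this]
  rw [Matrix.det_of_upperTriangular htri]
  have : ∀ a, (T.submatrix e.symm e.symm) a a = 1 := by
    intro a
    simp [T, Matrix.submatrix_apply]
  exact Finset.prod_eq_one fun a _ => this a

end Main

section Main2

variable {m : ℕ} {sfun : Fin m → ℕ} (lam : Fin m → ℂ) (r : ℕ)
  (pos : (Σ j : Fin m, Fin (sfun j)) → ℕ)

lemma gv_VT :
    (Matrix.of fun p q : Σ j : Fin m, Fin (sfun j) =>
        (C (lam q.1) * (1 + X) ^ (q.2.1 : ℕ)) ^ (r + pos p)) *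
      (Matrix.of fun q' q : Σ j : Fin m, Fin (sfun j) =>
        if q'.1 = q.1 then ((-1 : ℂ[X]) ^ (q.2.1 - q'.2.1) * (q.2.1.choose q'.2.1 : ℂ[X])) else 0)
    = Matrix.of fun p q : Σ j : Fin m, Fin (sfun j) =>
        X ^ (q.2.1 : ℕ) * (C (lam q.1 ^ (r + pos p)) * gvG (r + pos p) ^ (q.2.1 : ℕ)) := by
  refine Matrix.ext fun p q => ?_
  rw [Matrix.mul_apply]
  rw [← Finset.univ_sigma_univ, Finset.sum_sigma]
  simp only [Matrix.of_apply]
  rw [Finset.sum_eq_single q.1]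
  rotate_left
  · intro j _ hj
    apply Finset.sum_eq_zero
    intro l _
    simp [hj]
  · intro h
    exact absurd (Finset.mem_univ _) h
  · have hterm : ∀ l : Fin (sfun q.1),
        (C (lam (⟨q.1, l⟩ : Σ j : Fin m, Fin (sfun j)).1) * (1 + X) ^ (l : ℕ)) ^ (r + pos p) *
          (if (⟨q.1, l⟩ : Σ j : Fin m, Fin (sfun j)).1 = q.1 then
            ((-1 : ℂ[X]) ^ (q.2.1 - l.1) * (q.2.1.choose l.1 : ℂ[X])) else 0)
        = C (lam q.1) ^ (r + pos p) *
            (((1 + X) ^ (r + pos p)) ^ (l : ℕ) * (-1) ^ (q.2.1 - l.1) *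
              (q.2.1.choose l.1 : ℂ[X])) := by
      intro l
      rw [if_pos rfl]
      rw [mul_pow, ← pow_mul, ← pow_mul, mul_comm (l : ℕ) (r + pos p)]
      ring
    calc (∑ l : Fin (sfun q.1),
            (C (lam q.1) * (1 + X) ^ (l.1 : ℕ)) ^ (r + pos p) *
              (if q.1 = q.1 then
                ((-1 : ℂ[X]) ^ (q.2.1 - l.1) * (q.2.1.choose l.1 : ℂ[X])) else 0))
        = ∑ l : Fin (sfun q.1), C (lam q.1) ^ (r + pos p) *
            (((1 + X) ^ (r + pos p)) ^ (l : ℕ) * (-1) ^ (q.2.1 - l.1) *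
              (q.2.1.choose l.1 : ℂ[X])) := Finset.sum_congr rfl fun l _ => hterm l
      _ = C (lam q.1) ^ (r + pos p) *
            ∑ l ∈ range (sfun q.1), ((1 + X) ^ (r + pos p)) ^ l * (-1) ^ (q.2.1 - l) *
              (q.2.1.choose l : ℂ[X]) := by
          rw [← Finset.mul_sum]
          congr 1
          exact Fin.sum_univ_eq_sum_range
            (fun l => ((1 + X) ^ (r + pos p)) ^ l * (-1) ^ (q.2.1 - l) *
              (q.2.1.choose l : ℂ[X])) (sfun q.1)
      _ = C (lam q.1) ^ (r + pos p) *
            ∑ l ∈ range (q.2.1 + 1), ((1 + X) ^ (r + pos p)) ^ l * (-1) ^ (q.2.1 - l) *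
              (q.2.1.choose l : ℂ[X]) := by
          congr 1
          refine (Finset.sum_subset (Finset.range_subset_range.2 q.2.2) ?_).symm
          intro l _ hl
          simp only [Finset.mem_range, not_lt] at hl
          rw [Nat.choose_eq_zero_of_lt hl]
          simp
      _ = C (lam q.1) ^ (r + pos p) * ((1 + X) ^ (r + pos p) - 1) ^ (q.2.1 : ℕ) := by
          rw [gv_sub_one_pow]
      _ = X ^ (q.2.1 : ℕ) * (C (lam q.1 ^ (r + pos p)) * gvG (r + pos p) ^ (q.2.1 : ℕ)) := by
          rw [← gvG_mul_X, mul_pow, ← map_pow]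
          ring

end Main2

section Main3

variable {m : ℕ} {sfun : Fin m → ℕ} (lam : Fin m → ℂ) (r : ℕ)
  (pos : (Σ j : Fin m, Fin (sfun j)) → ℕ)
  (hinj : Function.Injective pos)
  (hlt : ∀ a, pos a < ∑ j, sfun j)
  (hiff : ∀ a b : Σ j : Fin m, Fin (sfun j),
    pos a < pos b ↔ (a.1 < b.1 ∨ (a.1 = b.1 ∧ a.2.1 < b.2.1)))

include hinj hlt hiff in
lemma gv_colop :
    (Matrix.of fun p q : Σ j : Fin m, Fin (sfun j) =>
        (C (lam q.1) * (1 + X) ^ (q.2.1 : ℕ)) ^ (r + pos p)).det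
    = X ^ (∑ q : Σ j : Fin m, Fin (sfun j), (q.2.1 : ℕ)) *
      (Matrix.of fun p q : Σ j : Fin m, Fin (sfun j) =>
        C (lam q.1 ^ (r + pos p)) * gvG (r + pos p) ^ (q.2.1 : ℕ)).det := by
  set V := Matrix.of fun p q : Σ j : Fin m, Fin (sfun j) =>
        (C (lam q.1) * (1 + X) ^ (q.2.1 : ℕ)) ^ (r + pos p)
  set W := Matrix.of fun p q : Σ j : Fin m, Fin (sfun j) =>
        C (lam q.1 ^ (r + pos p)) * gvG (r + pos p) ^ (q.2.1 : ℕ)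
  set T := Matrix.of fun q' q : Σ j : Fin m, Fin (sfun j) =>
      if q'.1 = q.1 then ((-1 : ℂ[X]) ^ (q.2.1 - q'.2.1) * (q.2.1.choose q'.2.1 : ℂ[X])) else 0
  have h1 : V.det = (V * T).det := by
    rw [Matrix.det_mul, gv_detT pos hinj hlt hiff, mul_one]
  rw [h1, gv_VT lam r pos]
  have h2 : (Matrix.of fun p q : Σ j : Fin m, Fin (sfun j) =>
      X ^ (q.2.1 : ℕ) * (C (lam q.1 ^ (r + pos p)) * gvG (r + pos p) ^ (q.2.1 : ℕ)))
      = Matrix.of fun p q : Σ j : Fin m, Fin (sfun j) =>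
        (fun q : Σ j : Fin m, Fin (sfun j) => X ^ (q.2.1 : ℕ)) q * W p q := rfl
  rw [h2, Matrix.det_mul_row]
  congr 1
  exact Finset.prod_pow_eq_pow_sum univ (fun q : Σ j : Fin m, Fin (sfun j) => q.2.1) X

end Main3

section Main4

variable {m : ℕ} {sfun : Fin m → ℕ} (lam : Fin m → ℂ) (r : ℕ)
  (pos : (Σ j : Fin m, Fin (sfun j)) → ℕ)
  (hinj : Function.Injective pos)
  (hlt : ∀ a, pos a < ∑ j, sfun j)

include hinj hlt in
lemma gv_vander :
    (Matrix.of fun p q : Σ j : Fin m, Fin (sfun j) =>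
        (C (lam q.1) * (1 + X) ^ (q.2.1 : ℕ)) ^ (r + pos p)).det
    = (∏ q : Σ j : Fin m, Fin (sfun j), (C (lam q.1) * (1 + X) ^ (q.2.1 : ℕ)) ^ r) *
      ∏ a : Σ j : Fin m, Fin (sfun j), ∏ b : Σ j : Fin m, Fin (sfun j),
        if pos a < pos b then
          (C (lam b.1) * (1 + X) ^ (b.2.1 : ℕ)) - (C (lam a.1) * (1 + X) ^ (a.2.1 : ℕ))
        else 1 := by
  set μ := fun q : Σ j : Fin m, Fin (sfun j) => C (lam q.1) * (1 + X) ^ (q.2.1 : ℕ) with hμ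
  set V := Matrix.of fun p q : Σ j : Fin m, Fin (sfun j) => μ q ^ (r + pos p) with hV
  set e := gvE pos hinj hlt with he
  set ν := fun b : Fin (∑ j, sfun j) => μ (e.symm b) with hν
  have h1 : V.det = (V.submatrix e.symm e.symm).det :=
    (Matrix.det_submatrix_equiv_self e.symm V).symm
  have h2 : V.submatrix e.symm e.symm
      = Matrix.of fun a b : Fin (∑ j, sfun j) =>
          (fun b => ν b ^ r) b * (Matrix.vandermonde ν)ᵀ a b := by
    refine Matrix.ext fun a b => ?_
    simp only [Matrix.submatrix_apply, Matrix.of_apply, Matrix.transpose_apply,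
      Matrix.vandermonde_apply, hV]
    rw [gv_pos_symm pos hinj hlt a, ← pow_add]
  have h3 : (∏ i : Fin (∑ j, sfun j), ∏ j ∈ Finset.Ioi i, (ν j - ν i))
      = ∏ a : Σ j : Fin m, Fin (sfun j), ∏ b : Σ j : Fin m, Fin (sfun j),
        if pos a < pos b then μ b - μ a else 1 := by
    have step1 : ∀ i : Fin (∑ j, sfun j), (∏ j ∈ Finset.Ioi i, (ν j - ν i))
        = ∏ j : Fin (∑ j, sfun j), if i < j then ν j - ν i else 1 := by
      intro i
      rw [← Finset.univ_inter (Finset.Ioi i),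
        ← Finset.prod_ite_mem univ (Finset.Ioi i) (fun j => ν j - ν i)]
      simp_rw [Finset.mem_Ioi]
    simp_rw [step1]
    rw [← Equiv.prod_comp e (fun i => ∏ j : Fin (∑ j, sfun j), if i < j then ν j - ν i else 1)]
    refine Finset.prod_congr rfl fun a _ => ?_
    rw [← Equiv.prod_comp e (fun j => if e a < j then ν j - ν (e a) else 1)]
    refine Finset.prod_congr rfl fun b _ => ?_
    have hlt' : (e a < e b) ↔ pos a < pos b := by
      rw [Fin.lt_def]
      rfl
    simp only [hν, Equiv.symm_apply_apply, hlt']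
  rw [h1, h2, Matrix.det_mul_row, Matrix.det_transpose, Matrix.det_vandermonde, h3]
  congr 1
  exact Equiv.prod_comp e.symm (fun q => μ q ^ r)

end Main4

/-- Generalized Vandermonde determinant (Lemma 3.1 of the paper).  The rows are indexed by
positions `p = r+1, …, r+s` (here encoded by the rank of an index in the lexicographically
ordered sigma type), the columns come in blocks: the `j`-th block consists of the functions
`n ↦ n^x λ_j^n`, `0 ≤ x ≤ s_j - 1`, evaluated at `n = p - 1`. -/
theorem stmt4 (m : ℕ) (hm : 0 < m) (lam : Fin m → ℂ) (hlam : ∀ j, lam j ≠ 0)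
    (sfun : Fin m → ℕ) (hs : ∀ j, 0 < sfun j) (r : ℕ)
    (pos : (Σ j : Fin m, Fin (sfun j)) → ℕ)
    (hpos : ∀ x : Σ j : Fin m, Fin (sfun j),
      pos x = (∑ i ∈ Finset.univ.filter (fun i : Fin m => i < x.1), sfun i) + x.2.1) :
    (Matrix.of fun p q : Σ j : Fin m, Fin (sfun j) =>
        ((r + pos p : ℕ) : ℂ) ^ (q.2.1 : ℕ) * (lam q.1) ^ (r + pos p : ℕ)).det =
      (∏ j : Fin m, (∏ k ∈ Finset.range (sfun j), (k.factorial : ℂ)) *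
          (lam j) ^ (sfun j * (sfun j + 2 * r - 1) / 2)) *
        ∏ ij ∈ Finset.univ.filter (fun ij : Fin m × Fin m => ij.1 < ij.2),
          (lam ij.2 - lam ij.1) ^ (sfun ij.1 * sfun ij.2) := by
  classical
  have hinj : Function.Injective pos := gv_pos_inj sfun pos hpos
  have hlt : ∀ a, pos a < ∑ j, sfun j := gv_pos_lt_total sfun pos hpos
  have hiff := gv_pos_lt_iff sfun pos hpos
  set μ : (Σ j : Fin m, Fin (sfun j)) → ℂ[X] :=
    fun q => C (lam q.1) * (1 + X) ^ (q.2.1 : ℕ) with hμ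
  set K := ∑ q : Σ j : Fin m, Fin (sfun j), (q.2.1 : ℕ) with hK
  set W := Matrix.of fun p q : Σ j : Fin m, Fin (sfun j) =>
      C (lam q.1 ^ (r + pos p)) * gvG (r + pos p) ^ (q.2.1 : ℕ) with hWdef
  -- Step 1 : the target determinant is `eval 0` of `W.det`
  have h1 : (Matrix.of fun p q : Σ j : Fin m, Fin (sfun j) =>
      ((r + pos p : ℕ) : ℂ) ^ (q.2.1 : ℕ) * (lam q.1) ^ (r + pos p : ℕ)).det
      = eval 0 W.det := by
    have hmap : (Matrix.of fun p q : Σ j : Fin m, Fin (sfun j) =>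
        ((r + pos p : ℕ) : ℂ) ^ (q.2.1 : ℕ) * (lam q.1) ^ (r + pos p : ℕ))
        = W.map (eval 0) := by
      refine Matrix.ext fun p q => ?_
      simp only [Matrix.of_apply, Matrix.map_apply, hWdef, coe_evalRingHom,
        eval_mul, eval_pow, eval_C, gvG_eval]
      push_cast
      ring
    rw [hmap]
    have hd := (evalRingHom 0).map_det W
    simp only [RingHom.mapMatrix_apply, coe_evalRingHom] at hd
    exact hd.symm
  -- Step 2 : polynomial identity
  -- same-block factor
  have hsame_factor : ∀ (i : Fin m) (x y : Fin (sfun i)), x.1 < y.1 →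
      μ ⟨i, y⟩ - μ ⟨i, x⟩
        = X * (C (lam i) * ((1 + X) ^ (x.1 : ℕ) * gvG (y.1 - x.1))) := by
    intro i x y hxy
    simp only [hμ]
    obtain ⟨d, hd⟩ : ∃ d, (y.1 : ℕ) = x.1 + (d + 1) := ⟨y.1 - x.1 - 1, by omega⟩
    rw [hd]
    have h2 : (x.1 + (d + 1)) - x.1 = d + 1 := by omega
    rw [h2, pow_add]
    calc C (lam i) * ((1 + X) ^ (x.1:ℕ) * (1 + X) ^ (d+1)) - C (lam i) * (1 + X) ^ (x.1:ℕ)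
        = C (lam i) * (1 + X) ^ (x.1:ℕ) * ((1 + X) ^ (d+1) - 1) := by ring
      _ = C (lam i) * (1 + X) ^ (x.1:ℕ) * (X * gvG (d+1)) := by rw [← gvG_mul_X]
      _ = X * (C (lam i) * ((1 + X) ^ (x.1:ℕ) * gvG (d+1))) := by ring
  -- split of the conditional factor
  have hsplit : ∀ a b : Σ j : Fin m, Fin (sfun j),
      (if pos a < pos b then μ b - μ a else 1)
        = (if a.1 < b.1 then μ b - μ a else 1)
          * (if a.1 = b.1 ∧ a.2.1 < b.2.1 then μ b - μ a else 1) := by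
    intro a b
    by_cases hc1 : a.1 < b.1
    · have h' : pos a < pos b := (hiff a b).2 (Or.inl hc1)
      rw [if_pos h', if_pos hc1, if_neg (fun h => (ne_of_lt hc1) h.1), mul_one]
    · by_cases hc2 : a.1 = b.1 ∧ a.2.1 < b.2.1
      · have h' : pos a < pos b := (hiff a b).2 (Or.inr hc2)
        rw [if_pos h', if_neg hc1, if_pos hc2, one_mul]
      · have h' : ¬ pos a < pos b := fun h => ((hiff a b).1 h).elim hc1 hc2
        rw [if_neg h', if_neg hc1, if_neg hc2, one_mul]
  -- expand same-block inner product
  have inner_same : ∀ a : Σ j : Fin m, Fin (sfun j),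
      (∏ b : Σ j : Fin m, Fin (sfun j), if a.1 = b.1 ∧ a.2.1 < b.2.1 then μ b - μ a else 1)
        = ∏ y : Fin (sfun a.1), if a.2.1 < y.1 then μ ⟨a.1, y⟩ - μ a else 1 := by
    intro a
    rw [← Finset.univ_sigma_univ, Finset.prod_sigma]
    rw [Finset.prod_eq_single a.1]
    · exact Finset.prod_congr rfl fun y _ => by simp
    · intro j _ hj
      exact Finset.prod_eq_one fun y _ => if_neg (by rintro ⟨h, -⟩; exact hj h.symm)
    · intro h; exact absurd (Finset.mem_univ _) h
  -- the same-block product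
  have hQsame : (∏ a : Σ j : Fin m, Fin (sfun j), ∏ b : Σ j : Fin m, Fin (sfun j),
        if a.1 = b.1 ∧ a.2.1 < b.2.1 then μ b - μ a else 1)
      = X ^ K * ∏ i : Fin m, ∏ x : Fin (sfun i), ∏ y : Fin (sfun i),
          (if x.1 < y.1 then C (lam i) * ((1 + X) ^ (x.1 : ℕ) * gvG (y.1 - x.1)) else 1) := by
    calc (∏ a : Σ j : Fin m, Fin (sfun j), ∏ b : Σ j : Fin m, Fin (sfun j),
        if a.1 = b.1 ∧ a.2.1 < b.2.1 then μ b - μ a else 1)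
        = ∏ a : Σ j : Fin m, Fin (sfun j), ∏ y : Fin (sfun a.1),
            if a.2.1 < y.1 then μ ⟨a.1, y⟩ - μ a else 1 :=
          Finset.prod_congr rfl fun a _ => inner_same a
      _ = ∏ i : Fin m, ∏ x : Fin (sfun i), ∏ y : Fin (sfun i),
            if x.1 < y.1 then μ ⟨i, y⟩ - μ ⟨i, x⟩ else 1 := by
          rw [← Finset.univ_sigma_univ, Finset.prod_sigma]
      _ = ∏ i : Fin m, ∏ x : Fin (sfun i), ∏ y : Fin (sfun i),
            ((if x.1 < y.1 then (X : ℂ[X]) else 1) *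
              (if x.1 < y.1 then C (lam i) * ((1 + X) ^ (x.1 : ℕ) * gvG (y.1 - x.1)) else 1)) := by
          refine Finset.prod_congr rfl fun i _ => Finset.prod_congr rfl fun x _ =>
            Finset.prod_congr rfl fun y _ => ?_
          by_cases hxy : x.1 < y.1
          · rw [if_pos hxy, if_pos hxy, if_pos hxy, hsame_factor i x y hxy]
          · rw [if_neg hxy, if_neg hxy, if_neg hxy, one_mul]
      _ = (∏ i : Fin m, ∏ x : Fin (sfun i), ∏ y : Fin (sfun i),
              (if x.1 < y.1 then (X : ℂ[X]) else 1)) *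
            ∏ i : Fin m, ∏ x : Fin (sfun i), ∏ y : Fin (sfun i),
              (if x.1 < y.1 then C (lam i) * ((1 + X) ^ (x.1 : ℕ) * gvG (y.1 - x.1)) else 1) := by
          simp_rw [Finset.prod_mul_distrib]
      _ = X ^ K * ∏ i : Fin m, ∏ x : Fin (sfun i), ∏ y : Fin (sfun i),
            (if x.1 < y.1 then C (lam i) * ((1 + X) ^ (x.1 : ℕ) * gvG (y.1 - x.1)) else 1) := by
          congr 1
          have hXpow : ∀ (i : Fin m) (x y : Fin (sfun i)),
              (if x.1 < y.1 then (X : ℂ[X]) else 1) = X ^ (if x.1 < y.1 then 1 else 0) := by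
            intro i x y; split <;> simp
          simp_rw [hXpow, Finset.prod_pow_eq_pow_sum]
          congr 1
          rw [hK, ← Finset.univ_sigma_univ, Finset.sum_sigma]
          refine Finset.sum_congr rfl fun i _ => ?_
          rw [Finset.sum_comm]
          exact Finset.sum_congr rfl fun y _ => gv_fin_sum_ite _ y
  -- the cross-block product
  have hQcross : (∏ a : Σ j : Fin m, Fin (sfun j), ∏ b : Σ j : Fin m, Fin (sfun j),
        if a.1 < b.1 then μ b - μ a else 1)
      = ∏ i : Fin m, ∏ j : Fin m, ∏ x : Fin (sfun i), ∏ y : Fin (sfun j),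
          if i < j then μ ⟨j, y⟩ - μ ⟨i, x⟩ else 1 := by
    rw [← Finset.univ_sigma_univ, Finset.prod_sigma]
    refine Finset.prod_congr rfl fun i _ => ?_
    have hb : ∀ x : Fin (sfun i), (∏ b : Σ j : Fin m, Fin (sfun j),
        if i < b.1 then μ b - μ ⟨i, x⟩ else 1)
        = ∏ j : Fin m, ∏ y : Fin (sfun j), if i < j then μ ⟨j, y⟩ - μ ⟨i, x⟩ else 1 := by
      intro x
      rw [← Finset.univ_sigma_univ, Finset.prod_sigma]
    refine (Finset.prod_congr rfl fun x _ => hb x).trans Finset.prod_comm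
  -- combine into the key polynomial identity
  have hQfull : (∏ a : Σ j : Fin m, Fin (sfun j), ∏ b : Σ j : Fin m, Fin (sfun j),
        if pos a < pos b then μ b - μ a else 1)
      = (∏ i : Fin m, ∏ j : Fin m, ∏ x : Fin (sfun i), ∏ y : Fin (sfun j),
          if i < j then μ ⟨j, y⟩ - μ ⟨i, x⟩ else 1) *
        (X ^ K * ∏ i : Fin m, ∏ x : Fin (sfun i), ∏ y : Fin (sfun i),
          (if x.1 < y.1 then C (lam i) * ((1 + X) ^ (x.1 : ℕ) * gvG (y.1 - x.1)) else 1)) := by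
    rw [← hQcross, ← hQsame, ← Finset.prod_mul_distrib]
    refine Finset.prod_congr rfl fun a _ => ?_
    rw [← Finset.prod_mul_distrib]
    exact Finset.prod_congr rfl fun b _ => hsplit a b
  have hv1 := gv_colop lam r pos hinj hlt hiff
  have hv2 := gv_vander lam r pos hinj hlt
  rw [← hWdef, ← hK] at hv1
  have hWdet : W.det
      = (∏ q : Σ j : Fin m, Fin (sfun j), (C (lam q.1) * (1 + X) ^ (q.2.1 : ℕ)) ^ r) *
        (∏ i : Fin m, ∏ j : Fin m, ∏ x : Fin (sfun i), ∏ y : Fin (sfun j),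
          if i < j then μ ⟨j, y⟩ - μ ⟨i, x⟩ else 1) *
        ∏ i : Fin m, ∏ x : Fin (sfun i), ∏ y : Fin (sfun i),
          (if x.1 < y.1 then C (lam i) * ((1 + X) ^ (x.1 : ℕ) * gvG (y.1 - x.1)) else 1) := by
    have hXK : (X : ℂ[X]) ^ K ≠ 0 := pow_ne_zero _ X_ne_zero
    refine mul_left_cancel₀ hXK ?_
    rw [← hv1, hv2, hQfull]
    ring
  -- Step 3 : evaluate at 0
  have hEvalA : eval 0 (∏ q : Σ j : Fin m, Fin (sfun j), (C (lam q.1) * (1 + X) ^ (q.2.1 : ℕ)) ^ r)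
      = ∏ i : Fin m, lam i ^ (r * sfun i) := by
    rw [eval_prod, ← Finset.univ_sigma_univ, Finset.prod_sigma]
    refine Finset.prod_congr rfl fun i _ => ?_
    have hx : ∀ x : Fin (sfun i), eval 0 ((C (lam i) * (1 + X) ^ (x.1 : ℕ)) ^ r) = lam i ^ r :=
      fun x => by simp
    refine (Finset.prod_congr rfl fun x _ => hx x).trans ?_
    rw [Finset.prod_const, Finset.card_univ, Fintype.card_fin, ← pow_mul]
  have hEvalQc : eval 0 (∏ i : Fin m, ∏ j : Fin m, ∏ x : Fin (sfun i), ∏ y : Fin (sfun j),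
        if i < j then μ ⟨j, y⟩ - μ ⟨i, x⟩ else 1)
      = ∏ i : Fin m, ∏ j : Fin m, if i < j then (lam j - lam i) ^ (sfun i * sfun j) else 1 := by
    simp only [hμ, eval_prod]
    refine Finset.prod_congr rfl fun i _ => Finset.prod_congr rfl fun j _ => ?_
    by_cases hij : i < j
    · have he : ∀ (x : Fin (sfun i)) (y : Fin (sfun j)),
          eval 0 (if i < j then
            C (lam j) * (1 + X) ^ (y.1 : ℕ) - C (lam i) * (1 + X) ^ (x.1 : ℕ) else 1)
          = lam j - lam i := by
        intro x y; rw [if_pos hij]; simp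
      refine (Finset.prod_congr rfl fun x _ => Finset.prod_congr rfl fun y _ => he x y).trans ?_
      rw [if_pos hij]
      simp only [Finset.prod_const, Finset.card_univ, Fintype.card_fin, ← pow_mul]
      rw [mul_comm (sfun j) (sfun i)]
    · have he : ∀ (x : Fin (sfun i)) (y : Fin (sfun j)),
          eval 0 (if i < j then
            C (lam j) * (1 + X) ^ (y.1 : ℕ) - C (lam i) * (1 + X) ^ (x.1 : ℕ) else 1)
          = 1 := by
        intro x y; rw [if_neg hij]; simp
      refine (Finset.prod_congr rfl fun x _ => Finset.prod_congr rfl fun y _ => he x y).trans ?_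
      rw [if_neg hij]
      simp
  have hEvalH : eval 0 (∏ i : Fin m, ∏ x : Fin (sfun i), ∏ y : Fin (sfun i),
        (if x.1 < y.1 then C (lam i) * ((1 + X) ^ (x.1 : ℕ) * gvG (y.1 - x.1)) else 1))
      = ∏ i : Fin m, ((∏ k ∈ range (sfun i), (k.factorial : ℂ)) *
          lam i ^ (∑ k ∈ range (sfun i), k)) := by
    simp only [eval_prod]
    refine Finset.prod_congr rfl fun i _ => ?_
    have he : ∀ x y : Fin (sfun i),
        eval 0 (if x.1 < y.1 then C (lam i) * ((1 + X) ^ (x.1 : ℕ) * gvG (y.1 - x.1)) else 1)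
        = (if x.1 < y.1 then lam i else 1) * (if x.1 < y.1 then ((y.1 - x.1 : ℕ) : ℂ) else 1) := by
      intro x y
      by_cases hxy : x.1 < y.1
      · rw [if_pos hxy, if_pos hxy, if_pos hxy]
        simp [gvG_eval]
      · rw [if_neg hxy, if_neg hxy, if_neg hxy]
        simp
    refine (Finset.prod_congr rfl fun x _ => Finset.prod_congr rfl fun y _ => he x y).trans ?_
    simp_rw [Finset.prod_mul_distrib]
    rw [mul_comm]
    congr 1
    · rw [Finset.prod_comm]
      refine (Finset.prod_congr rfl fun y _ => gv_fin_prod_ite_sub _ y).trans ?_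
      exact Fin.prod_univ_eq_prod_range (fun k => (k.factorial : ℂ)) (sfun i)
    · have hl : ∀ x y : Fin (sfun i), (if x.1 < y.1 then lam i else 1)
          = lam i ^ (if x.1 < y.1 then 1 else 0) := by
        intro x y; split <;> simp
      simp_rw [hl, Finset.prod_pow_eq_pow_sum]
      congr 1
      rw [Finset.sum_comm]
      refine (Finset.sum_congr rfl fun y _ => gv_fin_sum_ite _ y).trans ?_
      exact Fin.sum_univ_eq_sum_range (fun k => k) (sfun i)
  have hRHS : (∏ ij ∈ Finset.univ.filter (fun ij : Fin m × Fin m => ij.1 < ij.2),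
        (lam ij.2 - lam ij.1) ^ (sfun ij.1 * sfun ij.2))
      = ∏ i : Fin m, ∏ j : Fin m, if i < j then (lam j - lam i) ^ (sfun i * sfun j) else 1 := by
    rw [Finset.prod_filter]
    exact Fintype.prod_prod_type' (fun i j => if i < j then (lam j - lam i) ^ (sfun i * sfun j) else 1)
  rw [h1, hWdet, eval_mul, eval_mul, hEvalA, hEvalQc, hEvalH, hRHS]
  rw [mul_right_comm]
  congr 1
  rw [← Finset.prod_mul_distrib]
  refine Finset.prod_congr rfl fun i _ => ?_
  rw [← gv_nat_exp (sfun i) r (hs i), pow_add]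
  ring
end

section
/- For $\lambda, \alpha \in \mathbb{C}^*$ and $\beta, \gamma \in \mathbb{C}$, the formulas defining $\Omega(\lambda, \alpha, \beta, \gamma)$ make the polynomial ring $\mathbb{C}[s,t]$ into a module over the affine-Virasoro algebra of type $A_1$; that is, the action respects all the defining Lie brackets. -/
/-!
Each generator acts as a weighted shift `g ↦ c · p(s,t) · g(s - i, t + a)`. Shifts compose
additively, so the commutator of two weighted shifts is again one, with polynomial weight
`p · p'(s - i, t + a) - p' · p(s - j, t + b)`. Every bracket relation therefore reduces to an
identity between polynomials in `s, t` (and Laurent monomials in `λ`), checked pointwise; the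
central terms drop out because `C` acts by `0`.
-/

open MvPolynomial

/-- `ℂ[s,t]`, with `s = X 0` and `t = X 1`. -/
noncomputable abbrev P2 : Type := MvPolynomial (Fin 2) ℂ

/-- Substitution `g(s,t) ↦ g(s - i, t + a)`. -/
noncomputable def subST (i : ℤ) (a : ℂ) : P2 →ₐ[ℂ] P2 :=
  aeval ![X 0 - C (i : ℂ), X 1 + C a]

/-- Action of `e_i` on `Ω(λ,α,β,γ)`: `e_i(g) = λ^i α g(s-i, t-2)`. -/
noncomputable def omE (lam alp : ℂ) (i : ℤ) (g : P2) : P2 :=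
  (lam ^ i * alp) • subST i (-2) g

/-- Action of `f_i` on `Ω(λ,α,β,γ)`:
`f_i(g) = -(λ^i/α)(t/2-β)(t/2+β+1) g(s-i, t+2)`. -/
noncomputable def omF (lam alp bet : ℂ) (i : ℤ) (g : P2) : P2 :=
  (-(lam ^ i / alp)) • ((C (1/2 : ℂ) * X 1 - C bet) * (C (1/2 : ℂ) * X 1 + C bet + 1) *
    subST i 2 g)

/-- Action of `h_i`: `h_i(g) = λ^i t g(s-i, t)`. -/
noncomputable def omH (lam : ℂ) (i : ℤ) (g : P2) : P2 :=
  lam ^ i • (X 1 * subST i 0 g)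

/-- Action of `d_i`: `d_i(g) = λ^i (s + iγ) g(s-i, t)`. -/
noncomputable def omD (lam gam : ℂ) (i : ℤ) (g : P2) : P2 :=
  lam ^ i • ((X 0 + C ((i : ℂ) * gam)) * subST i 0 g)

/-- Action of `C`: `C(g) = 0`. -/
noncomputable def omC (g : P2) : P2 := 0

@[simp] lemma subST_X0 (i : ℤ) (a : ℂ) : subST i a (X 0) = X 0 - C (i : ℂ) := by simp [subST]

@[simp] lemma subST_X1 (i : ℤ) (a : ℂ) : subST i a (X 1) = X 1 + C a := by simp [subST]

lemma subST_comp (i j : ℤ) (a b : ℂ) :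
    (subST i a).comp (subST j b) = subST (i + j) (a + b) := by
  refine algHom_ext fun k => ?_
  fin_cases k <;> simp <;> ring

lemma subST_subST (i j : ℤ) (a b : ℂ) (g : P2) :
    subST i a (subST j b g) = subST (i + j) (a + b) g := by
  rw [← AlgHom.comp_apply, subST_comp]

noncomputable def weightedShift (c : ℂ) (p : P2) (i : ℤ) (a : ℂ) (g : P2) : P2 :=
  c • (p * subST i a g)

lemma weightedShift_weightedShift (c c' : ℂ) (p p' : P2) (i j : ℤ) (a b : ℂ) (g : P2) :
    weightedShift c p i a (weightedShift c' p' j b g) =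
      weightedShift (c * c') (p * subST i a p') (i + j) (a + b) g := by
  simp only [weightedShift, map_smul, map_mul, subST_subST, mul_smul_comm, smul_smul, mul_assoc]

lemma weightedShift_sub_comm (c c' : ℂ) (p p' : P2) (i j : ℤ) (a b : ℂ) (g : P2) :
    weightedShift c p i a (weightedShift c' p' j b g) -
        weightedShift c' p' j b (weightedShift c p i a g) =
      weightedShift (c * c') (p * subST i a p' - p' * subST j b p) (i + j) (a + b) g := by
  rw [weightedShift_weightedShift, weightedShift_weightedShift, add_comm j, add_comm b,
    mul_comm c']
  simp only [weightedShift, sub_mul, smul_sub]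

lemma weightedShift_sub_comm_eq (c c' c'' k : ℂ) (p p' q : P2) (i j : ℤ) (a b e : ℂ) (g : P2)
    (hab : a + b = e) (hw : (c * c') • (p * subST i a p' - p' * subST j b p) = (k * c'') • q) :
    weightedShift c p i a (weightedShift c' p' j b g) -
        weightedShift c' p' j b (weightedShift c p i a g) =
      k • weightedShift c'' q (i + j) e g := by
  rw [weightedShift_sub_comm, ← hab]
  simp only [weightedShift, smul_smul, ← smul_mul_assoc, hw]

lemma omE_eq (lam alp : ℂ) (i : ℤ) :
    omE lam alp i = weightedShift (lam ^ i * alp) 1 i (-2) := by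
  funext g
  simp [omE, weightedShift]

lemma omF_eq (lam alp bet : ℂ) (i : ℤ) :
    omF lam alp bet i = weightedShift (-(lam ^ i / alp))
      ((C (1/2 : ℂ) * X 1 - C bet) * (C (1/2 : ℂ) * X 1 + C bet + 1)) i 2 := rfl

lemma omH_eq (lam : ℂ) (i : ℤ) : omH lam i = weightedShift (lam ^ i) (X 1) i 0 := rfl

lemma omD_eq (lam gam : ℂ) (i : ℤ) :
    omD lam gam i = weightedShift (lam ^ i) (X 0 + C ((i : ℂ) * gam)) i 0 := rfl

section Brackets

variable {lam : ℂ} (alp bet gam : ℂ) (i j : ℤ) (g : P2)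

lemma omE_omF_sub (hlam : lam ≠ 0) (halp : alp ≠ 0) :
    omE lam alp i (omF lam alp bet j g) - omF lam alp bet j (omE lam alp i g) =
      omH lam (i + j) g := by
  rw [← one_smul ℂ (omH lam (i + j) g), omE_eq, omF_eq, omH_eq]
  apply weightedShift_sub_comm_eq
  · norm_num
  apply MvPolynomial.funext
  intro x
  simp [zpow_add₀ hlam]
  field_simp
  ring

lemma omH_omE_sub (hlam : lam ≠ 0) :
    omH lam i (omE lam alp j g) - omE lam alp j (omH lam i g) =
      (2 : ℂ) • omE lam alp (i + j) g := by
  rw [omE_eq, omE_eq, omH_eq]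
  apply weightedShift_sub_comm_eq
  · norm_num
  apply MvPolynomial.funext
  intro x
  simp [zpow_add₀ hlam]
  ring

lemma omH_omF_sub (hlam : lam ≠ 0) :
    omH lam i (omF lam alp bet j g) - omF lam alp bet j (omH lam i g) =
      (-2 : ℂ) • omF lam alp bet (i + j) g := by
  rw [omF_eq, omF_eq, omH_eq]
  apply weightedShift_sub_comm_eq
  · norm_num
  apply MvPolynomial.funext
  intro x
  simp [zpow_add₀ hlam]
  ring

lemma omD_omD_sub (hlam : lam ≠ 0) :
    omD lam gam i (omD lam gam j g) - omD lam gam j (omD lam gam i g) =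
      ((j : ℂ) - (i : ℂ)) • omD lam gam (i + j) g := by
  rw [omD_eq, omD_eq, omD_eq]
  apply weightedShift_sub_comm_eq
  · norm_num
  apply MvPolynomial.funext
  intro x
  simp [zpow_add₀ hlam]
  ring

lemma omD_omH_sub (hlam : lam ≠ 0) :
    omD lam gam i (omH lam j g) - omH lam j (omD lam gam i g) =
      (j : ℂ) • omH lam (i + j) g := by
  rw [omD_eq, omH_eq, omH_eq]
  apply weightedShift_sub_comm_eq
  · norm_num
  apply MvPolynomial.funext
  intro x
  simp [zpow_add₀ hlam]
  ring

lemma omH_omH_sub : omH lam i (omH lam j g) - omH lam j (omH lam i g) = 0 := by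
  rw [omH_eq, omH_eq, weightedShift_sub_comm]
  simp [weightedShift]

lemma omD_omE_sub (hlam : lam ≠ 0) :
    omD lam gam i (omE lam alp j g) - omE lam alp j (omD lam gam i g) =
      (j : ℂ) • omE lam alp (i + j) g := by
  rw [omD_eq, omE_eq, omE_eq]
  apply weightedShift_sub_comm_eq
  · norm_num
  apply MvPolynomial.funext
  intro x
  simp [zpow_add₀ hlam]
  ring

lemma omD_omF_sub (hlam : lam ≠ 0) :
    omD lam gam i (omF lam alp bet j g) - omF lam alp bet j (omD lam gam i g) =
      (j : ℂ) • omF lam alp bet (i + j) g := by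
  rw [omD_eq, omF_eq, omF_eq]
  apply weightedShift_sub_comm_eq
  · norm_num
  apply MvPolynomial.funext
  intro x
  simp [zpow_add₀ hlam]
  ring

lemma omE_omE_comm : omE lam alp i (omE lam alp j g) = omE lam alp j (omE lam alp i g) := by
  rw [← sub_eq_zero, omE_eq, omE_eq, weightedShift_sub_comm]
  simp [weightedShift]

lemma omF_omF_comm :
    omF lam alp bet i (omF lam alp bet j g) = omF lam alp bet j (omF lam alp bet i g) := by
  rw [← sub_eq_zero, omF_eq, omF_eq, weightedShift_sub_comm]
  simp [weightedShift]

end Brackets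

/-- The formulas for `Ω(λ,α,β,γ)` make `ℂ[s,t]` a module over the affine-Virasoro algebra of
type `A₁`: the action respects all the defining Lie brackets. -/
theorem stmt8 (lam alp : ℂ) (hlam : lam ≠ 0) (halp : alp ≠ 0) (bet gam : ℂ) :
    ∀ (i j : ℤ) (g : P2),
      (omE lam alp i (omF lam alp bet j g) - omF lam alp bet j (omE lam alp i g) =
        omH lam (i + j) g + (if i + j = 0 then (i : ℂ) else 0) • omC g) ∧
      (omH lam i (omE lam alp j g) - omE lam alp j (omH lam i g) =
        (2 : ℂ) • omE lam alp (i + j) g) ∧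
      (omH lam i (omF lam alp bet j g) - omF lam alp bet j (omH lam i g) =
        (-2 : ℂ) • omF lam alp bet (i + j) g) ∧
      (omD lam gam i (omD lam gam j g) - omD lam gam j (omD lam gam i g) =
        ((j : ℂ) - (i : ℂ)) • omD lam gam (i + j) g +
          (if i + j = 0 then ((i : ℂ) ^ 3 - (i : ℂ)) / 12 else 0) • omC g) ∧
      (omD lam gam i (omH lam j g) - omH lam j (omD lam gam i g) =
        (j : ℂ) • omH lam (i + j) g) ∧
      (omH lam i (omH lam j g) - omH lam j (omH lam i g) =
        (if i + j = 0 then (-2 * (i : ℂ)) else 0) • omC g) ∧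
      (omD lam gam i (omE lam alp j g) - omE lam alp j (omD lam gam i g) =
        (j : ℂ) • omE lam alp (i + j) g) ∧
      (omD lam gam i (omF lam alp bet j g) - omF lam alp bet j (omD lam gam i g) =
        (j : ℂ) • omF lam alp bet (i + j) g) ∧
      (omE lam alp i (omE lam alp j g) = omE lam alp j (omE lam alp i g)) ∧
      (omF lam alp bet i (omF lam alp bet j g) = omF lam alp bet j (omF lam alp bet i g)) ∧
      (omE lam alp i (omC g) = omC (omE lam alp i g)) ∧
      (omF lam alp bet i (omC g) = omC (omF lam alp bet i g)) ∧
      (omH lam i (omC g) = omC (omH lam i g)) ∧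
      (omD lam gam i (omC g) = omC (omD lam gam i g)) := by
  intro i j g
  simp only [omC, smul_zero, add_zero]
  refine ⟨omE_omF_sub alp bet i j g hlam halp, omH_omE_sub alp i j g hlam,
    omH_omF_sub alp bet i j g hlam, omD_omD_sub gam i j g hlam, omD_omH_sub gam i j g hlam,
    omH_omH_sub i j g, omD_omE_sub alp gam i j g hlam, omD_omF_sub alp bet gam i j g hlam,
    omE_omE_comm alp i j g, omF_omF_comm alp bet i j g, ?_, ?_, ?_, ?_⟩ <;>
  simp [omE, omF, omH, omD]
end
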